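/- arXiv:math/9807181 — 2 statements merged into one kernel-verified Lean document; each statement's English description precedes it below -/
import Mathlib

section
/- Every eventually coherent I ⊆ Ind(γ) contains an eventually coherent subset J such that the fibers ⟨J_i : i ∈ dom(J)⟩ form a decreasing chain of end segments of dom(J); i.e., for each i ∈ dom(J), J_i = dom(J) \ (min J_i), and for i ≤ j in dom(J), min J_i ≤ min J_j. -/
namespace Paper644

/-- `S` is a bounded subset of `γ`. -/
def bddIn (γ : Ordinal) (S : Set Ordinal) : Prop := ∃ β < γ, ∀ x ∈ S, x < β

/-- `S` is an unbounded subset of `γ`. -/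
def unbddIn (γ : Ordinal) (S : Set Ordinal) : Prop := ∀ β < γ, ∃ x ∈ S, β ≤ x

/-- `Ind γ = {(i,j) : i < j < γ}`. -/
def Ind (γ : Ordinal) : Set (Ordinal × Ordinal) := {p | p.1 < p.2 ∧ p.2 < γ}

/-- `dom I = {i : ∃ j, (i,j) ∈ I}`. -/
def dom (I : Set (Ordinal × Ordinal)) : Set Ordinal := {i | ∃ j, (i, j) ∈ I}

/-- The fiber `I_i = {j : (i,j) ∈ I}`. -/
def fib (I : Set (Ordinal × Ordinal)) (i : Ordinal) : Set Ordinal := {j | (i, j) ∈ I}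

/-- `I` is eventually coherent: `dom I` is unbounded in `γ` and for every `i ∈ dom I`,
`dom I \ I_i` is a bounded subset of `γ`. -/
def EvCoh (γ : Ordinal) (I : Set (Ordinal × Ordinal)) : Prop :=
  unbddIn γ (dom I) ∧ ∀ i ∈ dom I, bddIn γ (dom I \ fib I i)

/-- A bound for `dom I \ fib I i`. -/
noncomputable def gbd (I : Set (Ordinal × Ordinal)) (i : Ordinal) : Ordinal :=
  sInf {β | ∀ x ∈ dom I \ fib I i, x < β}

theorem gbd_spec {γ : Ordinal} {I : Set (Ordinal × Ordinal)} (hec : EvCoh γ I)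
    {i : Ordinal} (hi : i ∈ dom I) :
    gbd I i < γ ∧ ∀ x ∈ dom I \ fib I i, x < gbd I i := by
  obtain ⟨β, hβγ, hβ⟩ := hec.2 i hi
  have hne : ({β | ∀ x ∈ dom I \ fib I i, x < β} : Set Ordinal).Nonempty := ⟨β, hβ⟩
  constructor
  · exact lt_of_le_of_lt (csInf_le' hβ) hβγ
  · exact csInf_mem hne

/-- The recursively defined fast sequence. -/
noncomputable def eseq (I : Set (Ordinal × Ordinal)) (f : Ordinal → Ordinal) :
    Ordinal → Ordinal
  | ξ => sInf {x | x ∈ dom I ∧ f ξ ≤ x ∧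
      ∀ η, ∀ _ : η < ξ, eseq I f η < x ∧ gbd I (eseq I f η) ≤ x}
  termination_by ξ => ξ
  decreasing_by exact ‹_›

theorem eseq_spec {γ : Ordinal} (hγ : Order.IsSuccLimit γ) {I : Set (Ordinal × Ordinal)}
    (hIInd : I ⊆ Ind γ) (hec : EvCoh γ I) {f : Ordinal → Ordinal}
    (hf : ∀ ξ < (Ordinal.cof γ).ord, f ξ < γ) :
    ∀ ξ < (Ordinal.cof γ).ord, eseq I f ξ ∈ dom I ∧ f ξ ≤ eseq I f ξ ∧
      ∀ η < ξ, eseq I f η < eseq I f ξ ∧ gbd I (eseq I f η) ≤ eseq I f ξ := by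
  intro ξ
  induction ξ using Ordinal.induction with
  | h ξ IH =>
    intro hξ
    -- the sup of constraints coming from earlier stages
    set T : ∀ η < ξ, Ordinal := fun η _ => max (eseq I f η + 1) (gbd I (eseq I f η)) with hT
    have hTlt : ∀ η hη, T η hη < γ := by
      intro η hη
      obtain ⟨hmem, -, -⟩ := IH η hη (hη.trans hξ)
      obtain ⟨j, hj⟩ := id hmem
      have hlt : eseq I f η < γ := lt_trans (hIInd hj).1 (hIInd hj).2
      exact max_lt (hγ.succ_lt hlt) (gbd_spec hec hmem).1
    have hcard : ξ.card < Ordinal.cof γ := Cardinal.lt_ord.1 hξ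
    have hsup : Ordinal.bsup ξ T < γ := Ordinal.bsup_lt_ord hcard hTlt
    have hβ : max (Ordinal.bsup ξ T) (f ξ + 1) < γ :=
      max_lt hsup (hγ.succ_lt (hf ξ hξ))
    obtain ⟨x, hxdom, hxge⟩ := hec.1 _ hβ
    have hxmem : x ∈ {x | x ∈ dom I ∧ f ξ ≤ x ∧
        ∀ η, ∀ _ : η < ξ, eseq I f η < x ∧ gbd I (eseq I f η) ≤ x} := by
      refine ⟨hxdom, ?_, ?_⟩
      · have : f ξ + 1 ≤ x := le_trans (le_max_right _ _) hxge
        exact le_of_lt (lt_of_lt_of_le (Order.lt_succ _) this)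
      · intro η hη
        have hTle : T η hη ≤ x :=
          le_trans (le_trans (Ordinal.le_bsup T η hη) (le_max_left _ _)) hxge
        constructor
        · exact lt_of_lt_of_le (Order.lt_succ _) (le_trans (le_max_left _ _) hTle)
        · exact le_trans (le_max_right _ _) hTle
    have heq : eseq I f ξ ∈ {x | x ∈ dom I ∧ f ξ ≤ x ∧
        ∀ η, ∀ _ : η < ξ, eseq I f η < x ∧ gbd I (eseq I f η) ≤ x} := by
      rw [eseq]
      exact csInf_mem ⟨x, hxmem⟩
    exact ⟨heq.1, heq.2.1, fun η hη => heq.2.2 η hη⟩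

theorem stmt2 (γ : Ordinal) (hγ : Order.IsSuccLimit γ) (I : Set (Ordinal × Ordinal))
    (hIInd : I ⊆ Ind γ) (hec : EvCoh γ I) :
    ∃ J ⊆ I, EvCoh γ J ∧
      (∀ i ∈ dom J, fib J i = {j ∈ dom J | sInf (fib J i) ≤ j}) ∧
      (∀ i ∈ dom J, ∀ j ∈ dom J, i ≤ j → sInf (fib J i) ≤ sInf (fib J j)) := by
  classical
  set c := (Ordinal.cof γ).ord with hc
  have hclim : Order.IsSuccLimit c := Cardinal.isSuccLimit_ord (Ordinal.aleph0_le_cof.2 hγ)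
  obtain ⟨f0, hf0⟩ := Ordinal.exists_blsub_cof γ
  set f : Ordinal → Ordinal := fun ξ => if h : ξ < c then f0 ξ h else 0 with hfdef
  have hflt : ∀ ξ < c, f ξ < γ := by
    intro ξ hξ
    simp only [hfdef, dif_pos hξ]
    rw [← hf0]
    exact Ordinal.lt_blsub _ _ _
  set e := eseq I f with he
  have hspec := eseq_spec hγ hIInd hec hflt
  -- basic facts
  have hmono : ∀ η ξ, η < ξ → ξ < c → e η < e ξ := fun η ξ h hξ =>
    ((hspec ξ hξ).2.2 η h).1
  have hmono' : ∀ η ξ, η ≤ ξ → ξ < c → e η ≤ e ξ := by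
    intro η ξ h hξ
    rcases eq_or_lt_of_le h with rfl | h
    · exact le_rfl
    · exact (hmono η ξ h hξ).le
  have hpair : ∀ η ξ, η < ξ → ξ < c → (e η, e ξ) ∈ I := by
    intro η ξ h hξ
    have hηdom := (hspec η (h.trans hξ)).1
    have hξdom := (hspec ξ hξ).1
    have hg := ((hspec ξ hξ).2.2 η h).2
    by_contra hni
    have : e ξ ∈ dom I \ fib I (e η) := ⟨hξdom, hni⟩
    exact absurd hg (not_le.2 ((gbd_spec hec hηdom).2 _ this))
  set J : Set (Ordinal × Ordinal) :=
    {p | ∃ η ξ, η < ξ ∧ ξ < c ∧ p = (e η, e ξ)} with hJ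
  have hJI : J ⊆ I := by
    rintro p ⟨η, ξ, h, hξ, rfl⟩
    exact hpair η ξ h hξ
  -- dom J
  have hdomJ : ∀ i, i ∈ dom J ↔ ∃ η < c, e η = i := by
    intro i
    constructor
    · rintro ⟨j, η, ξ, h, hξ, hp⟩
      exact ⟨η, h.trans hξ, (Prod.mk.injEq _ _ _ _ ▸ hp).1.symm⟩
    · rintro ⟨η, hη, rfl⟩
      exact ⟨e (η + 1), η, η + 1, lt_add_one η, hclim.succ_lt hη, rfl⟩
  have hfibJ : ∀ η, η < c → ∀ j, j ∈ fib J (e η) ↔ ∃ ξ, η < ξ ∧ ξ < c ∧ e ξ = j := by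
    intro η hη j
    constructor
    · rintro ⟨η', ξ, h, hξ, hp⟩
      obtain ⟨h1, h2⟩ := Prod.mk.injEq _ _ _ _ ▸ hp
      -- h1 : e η = e η'
      have hη'η : η' = η := by
        by_contra hne
        rcases lt_or_gt_of_ne hne with hlt | hlt
        · exact absurd h1 (ne_of_gt (hmono η' η hlt hη))
        · exact absurd h1 (ne_of_lt (hmono η η' hlt (h.trans hξ)))
      exact ⟨ξ, hη'η ▸ h, hξ, h2.symm⟩
    · rintro ⟨ξ, h, hξ, rfl⟩
      exact ⟨η, ξ, h, hξ, rfl⟩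
  have helt : ∀ η, η < c → e η < γ := by
    intro η hη
    obtain ⟨j, hj⟩ := (hspec η hη).1
    exact lt_trans (hIInd hj).1 (hIInd hj).2
  -- sInf of the fiber
  have hsInf : ∀ η, η < c → sInf (fib J (e η)) = e (η + 1) := by
    intro η hη
    have hη1 : η + 1 < c := hclim.succ_lt hη
    apply le_antisymm
    · exact csInf_le' ((hfibJ η hη _).2 ⟨η + 1, lt_add_one η, hη1, rfl⟩)
    · apply le_csInf ⟨e (η + 1), (hfibJ η hη _).2 ⟨η + 1, lt_add_one η, hη1, rfl⟩⟩
      intro b hb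
      obtain ⟨ξ, h, hξ, rfl⟩ := (hfibJ η hη b).1 hb
      exact hmono' (η + 1) ξ (Order.succ_le_of_lt h) hξ
  refine ⟨J, hJI, ⟨?_, ?_⟩, ?_, ?_⟩
  · -- unbdd
    intro β hβ
    have : β < Ordinal.blsub c f0 := hf0 ▸ hβ
    obtain ⟨ξ, hξ, hβξ⟩ := Ordinal.lt_blsub_iff.1 this
    refine ⟨e ξ, (hdomJ _).2 ⟨ξ, hξ, rfl⟩, ?_⟩
    have : f ξ ≤ e ξ := (hspec ξ hξ).2.1
    simp only [hfdef, dif_pos hξ] at this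
    exact le_trans hβξ this
  · -- fibers cobounded
    intro i hi
    obtain ⟨η, hη, rfl⟩ := (hdomJ i).1 hi
    refine ⟨e η + 1, hγ.succ_lt (helt η hη), ?_⟩
    rintro x ⟨hxdom, hxfib⟩
    obtain ⟨ζ, hζ, rfl⟩ := (hdomJ x).1 hxdom
    rcases le_or_gt ζ η with hle | hlt
    · exact lt_of_le_of_lt (hmono' ζ η hle hη) (Order.lt_succ _)
    · exact absurd ((hfibJ η hη _).2 ⟨ζ, hlt, hζ, rfl⟩) hxfib
  · -- fibers are end segments
    intro i hi
    obtain ⟨η, hη, rfl⟩ := (hdomJ i).1 hi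
    rw [hsInf η hη]
    ext j
    simp only [Set.mem_setOf_eq, Set.mem_sep_iff]
    constructor
    · intro hj
      obtain ⟨ξ, h, hξ, rfl⟩ := (hfibJ η hη j).1 hj
      exact ⟨(hdomJ _).2 ⟨ξ, hξ, rfl⟩, hmono' (η + 1) ξ (Order.succ_le_of_lt h) hξ⟩
    · rintro ⟨hjdom, hjge⟩
      obtain ⟨ζ, hζ, rfl⟩ := (hdomJ j).1 hjdom
      refine (hfibJ η hη _).2 ⟨ζ, ?_, hζ, rfl⟩
      by_contra hle
      push_neg at hle
      have : e ζ < e (η + 1) :=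
        lt_of_le_of_lt (hmono' ζ η (Order.lt_succ_iff.1 (lt_of_le_of_lt hle (Order.lt_succ _))) hη)
          (hmono η (η + 1) (lt_add_one η) (hclim.succ_lt hη))
      exact absurd hjge (not_le.2 this)
  · -- monotonicity
    intro i hi j hj hij
    obtain ⟨η, hη, rfl⟩ := (hdomJ i).1 hi
    obtain ⟨ζ, hζ, rfl⟩ := (hdomJ j).1 hj
    rw [hsInf η hη, hsInf ζ hζ]
    have hηζ : η ≤ ζ := by
      by_contra h
      push_neg at h
      exact absurd hij (not_le.2 (hmono ζ η h hη))
    exact hmono' (η + 1) (ζ + 1) (add_le_add_left hηζ 1) (hclim.succ_lt hζ)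

end Paper644
end

section
/- Let A be an inverse γ-system of abelian groups and a, b ∈ Gr(A). If there exists an eventually coherent subset I of Ind(γ) such that a_{i,j} = b_{i,j} for all (i,j) ∈ I, then a − b ∈ Fact(A) (i.e., a and b are equivalent modulo Fact(A)). -/
namespace Paper644

variable (γ : Ordinal) (G : Ordinal → Type) [∀ i, AddCommGroup (G i)]

/-- `Gr(A)` for an inverse `γ`-system `A = ⟨G_i, h_{i,j}⟩`: sequences
`⟨a_{i,j}⟩_{i<j<γ}` with `a_{i,j} ∈ G_i` and `a_{i,k} = a_{i,j} + h_{i,j}(a_{j,k})`.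
(Coordinates outside `i < j < γ` are required to be `0`.) -/
def Gr (h : ∀ i j, i < j → G j →+ G i) : Set (∀ i, Ordinal → G i) :=
  {a | (∀ i j, ¬(i < j ∧ j < γ) → a i j = 0) ∧
       ∀ i j k (hij : i < j) (hjk : j < k), k < γ →
         a i k = a i j + h i j hij (a j k)}

/-- `Fact(A)`: sequences of the form `⟨y_i - h_{i,j}(y_j)⟩_{i<j<γ}` for some
`y ∈ ∏_{k<γ} G_k`. (Coordinates outside `i < j < γ` are required to be `0`.) -/
def Fact (h : ∀ i j, i < j → G j →+ G i) : Set (∀ i, Ordinal → G i) :=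
  {a | (∀ i j, ¬(i < j ∧ j < γ) → a i j = 0) ∧
       ∃ y : ∀ i, G i, ∀ i j (hij : i < j), j < γ → a i j = y i - h i j hij (y j)}

theorem stmt4 (h : ∀ i j, i < j → G j →+ G i) (hγ : Order.IsSuccLimit γ)
    (hcomp : ∀ i j k (hij : i < j) (hjk : j < k), k < γ →
      ∀ x : G k, h i j hij (h j k hjk x) = h i k (hij.trans hjk) x)
    (a b : ∀ i, Ordinal → G i) (ha : a ∈ Gr γ G h) (hb : b ∈ Gr γ G h)
    (I : Set (Ordinal × Ordinal)) (hIInd : I ⊆ Ind γ) (hec : EvCoh γ I)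
    (hab : ∀ p ∈ I, a p.1 p.2 = b p.1 p.2) :
    a - b ∈ Fact γ G h := by
  obtain ⟨ha0, haG⟩ := ha
  obtain ⟨hb0, hbG⟩ := hb
  set c := a - b with hc
  have hc0 : ∀ i j, ¬(i < j ∧ j < γ) → c i j = 0 := fun i j hij => by
    simp [hc, ha0 i j hij, hb0 i j hij]
  have hcG : ∀ i j k (hij : i < j) (hjk : j < k), k < γ →
      c i k = c i j + h i j hij (c j k) := by
    intro i j k hij hjk hk
    simp only [hc, Pi.sub_apply, haG i j k hij hjk hk, hbG i j k hij hjk hk, map_sub]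
    abel
  have hcI : ∀ p ∈ I, c p.1 p.2 = 0 := fun p hp => by
    simp [hc, hab p hp]
  refine ⟨hc0, ?_⟩
  have hsel : ∀ i : Ordinal, i < γ → ∃ j, j ∈ dom I ∧ i < j := by
    intro i hi
    obtain ⟨j, hjI, hij⟩ := hec.1 (Order.succ i) (hγ.succ_lt hi)
    exact ⟨j, hjI, Order.succ_le_iff.mp hij⟩
  choose sel hselI hselLt using hsel
  refine ⟨fun i => if hi : i < γ then c i (sel i hi) else 0, ?_⟩
  intro i j hij hj
  have hi : i < γ := hij.trans hj
  obtain ⟨βi, hβiγ, hβi⟩ := hec.2 (sel i hi) (hselI i hi)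
  obtain ⟨βj, hβjγ, hβj⟩ := hec.2 (sel j hj) (hselI j hj)
  set β := max βi (max βj (Order.succ j)) with hβ
  have hβγ : β < γ := by
    simp only [hβ, max_lt_iff]
    exact ⟨hβiγ, hβjγ, hγ.succ_lt hj⟩
  obtain ⟨k, hkI, hβk⟩ := hec.1 β hβγ
  have hjk : j < k :=
    Order.succ_le_iff.mp (le_trans (le_max_of_le_right (le_max_right _ _)) hβk)
  have hik1 : (sel i hi, k) ∈ I := by
    by_contra hcon
    exact absurd (hβi k ⟨hkI, hcon⟩) (not_lt.mpr (le_trans (le_max_left _ _) hβk))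
  have hjk1 : (sel j hj, k) ∈ I := by
    by_contra hcon
    exact absurd (hβj k ⟨hkI, hcon⟩)
      (not_lt.mpr (le_trans (le_max_of_le_right (le_max_left _ _)) hβk))
  have hkγ : k < γ := (hIInd hik1).2
  have h1 : c i k = c i (sel i hi) := by
    rw [hcG i (sel i hi) k (hselLt i hi) (hIInd hik1).1 hkγ, hcI _ hik1, map_zero, add_zero]
  have h2 : c j k = c j (sel j hj) := by
    rw [hcG j (sel j hj) k (hselLt j hj) (hIInd hjk1).1 hkγ, hcI _ hjk1, map_zero, add_zero]
  have h3 := hcG i j k hij hjk hkγ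
  simp only [dif_pos hi, dif_pos hj]
  rw [← h1, ← h2, h3]
  abel

end Paper644
end
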